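/- arXiv:2109.10619 — 4 statements merged into one kernel-verified Lean document; each statement's English description precedes it below -/
import Mathlib

section
/- Suppose Λ = Uᵀ Λ' U where U is a nonnegative |T|×|T| real matrix and Λ, Λ' are nonnegative upper-triangular matrices with strictly positive diagonal entries. Then U = Π⁻¹ D, where D is a diagonal matrix with strictly positive diagonal entries and Π is a permutation matrix such that Πᵀ Λ Π is upper-triangular. -/
/-!
Every term of `Λ a b = ∑ k l, U k a * Λ' k l * U l b` is nonnegative, so for `b < a` all of
them vanish; the diagonal terms `U k a * Λ' k k * U k b` then show that two distinct columns of
`U` never share a nonzero row. As `Λ a a > 0`, no column of `U` is zero, so the nonzero entries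
of `U` lie on the graph of a permutation `π` and `U = Πᵀ D`. Finally `U Π = Πᵀ D Π` is diagonal,
and `Πᵀ Λ Π = (U Π)ᵀ Λ' (U Π)` is upper-triangular together with `Λ'`.
-/

open Matrix

/-- The permutation matrix of `π`: entry `(i, π i)` equals 1, others 0. -/
def permMatrix {T : Type*} [DecidableEq T] (π : Equiv.Perm T) : Matrix T T ℝ :=
  fun i j => if π i = j then 1 else 0

open Equiv

namespace Matrix

variable {T R : Type*}

theorem exists_perm_forall_apply_ne_zero_iff [Finite T] [Zero R] {U : Matrix T T R}
    (hcol : ∀ j, ∃ k, U k j ≠ 0) (hrow : ∀ {k i j}, U k i ≠ 0 → U k j ≠ 0 → i = j) :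
    ∃ π : Perm T, ∀ k j, U k j ≠ 0 ↔ π j = k := by
  choose f hf using hcol
  have hbij : Function.Bijective f :=
    Finite.injective_iff_bijective.mp fun i j hij => hrow (hf i) (hij ▸ hf j)
  refine ⟨Equiv.ofBijective f hbij, fun k j => ⟨fun hkj => ?_, fun hjk => hjk ▸ hf j⟩⟩
  obtain ⟨i, rfl⟩ := hbij.2 k
  simpa using congrArg f (hrow (hf i) hkj).symm

section Fintype

variable [Fintype T]

theorem transpose_mul_mul_apply [NonUnitalNonAssocSemiring R] (U A : Matrix T T R) (a b : T) :
    (Uᵀ * A * U) a b = ∑ k, ∑ l, U k a * A k l * U l b := by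
  simp only [mul_apply, transpose_apply, Finset.sum_mul]
  exact Finset.sum_comm

theorem transpose_mul_mul_apply_eq_zero_iff [Semiring R] [PartialOrder R] [IsOrderedRing R]
    {U A : Matrix T T R} (hU : ∀ i j, 0 ≤ U i j) (hA : ∀ i j, 0 ≤ A i j) (a b : T) :
    (Uᵀ * A * U) a b = 0 ↔ ∀ k l, U k a * A k l * U l b = 0 := by
  have hterm : ∀ k l, 0 ≤ U k a * A k l * U l b := fun k l =>
    mul_nonneg (mul_nonneg (hU k a) (hA k l)) (hU l b)
  rw [transpose_mul_mul_apply, Finset.sum_eq_zero_iff_of_nonneg fun k _ =>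
    Finset.sum_nonneg fun l _ => hterm k l]
  simp only [Finset.mem_univ, true_implies,
    Finset.sum_eq_zero_iff_of_nonneg fun l _ => hterm _ l]

theorem exists_apply_ne_zero_of_transpose_mul_mul_apply_ne_zero [NonUnitalNonAssocSemiring R]
    {U A : Matrix T T R} {a b : T} (h : (Uᵀ * A * U) a b ≠ 0) : ∃ k, U k a ≠ 0 := by
  contrapose! h
  simp [transpose_mul_mul_apply, h]

theorem eq_of_apply_ne_zero_of_isUpperTriangular_transpose_mul_mul [LinearOrder T] [Semiring R]
    [PartialOrder R] [IsOrderedRing R] [NoZeroDivisors R] {U A : Matrix T T R}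
    (hU : ∀ i j, 0 ≤ U i j) (hA : ∀ i j, 0 ≤ A i j) (hAd : ∀ k, A k k ≠ 0)
    (hB : (Uᵀ * A * U).IsUpperTriangular) {k i j : T} (hi : U k i ≠ 0) (hj : U k j ≠ 0) :
    i = j := by
  have hlt : ∀ {a b}, b < a → U k a ≠ 0 → U k b ≠ 0 → False := fun hba ha hb =>
    mul_ne_zero (mul_ne_zero ha (hAd k)) hb <|
      (transpose_mul_mul_apply_eq_zero_iff hU hA _ _).mp (hB hba) k k
  by_contra hij
  rcases lt_or_gt_of_ne hij with h | h
  exacts [hlt h hj hi, hlt h hi hj]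

section PermMatrix

variable [DecidableEq T]

theorem inv_permMatrix [CommRing R] (π : Perm T) : (π.permMatrix R)⁻¹ = π⁻¹.permMatrix R :=
  inv_eq_left_inv (by rw [← permMatrix_mul, mul_inv_cancel, permMatrix_one])

theorem permMatrix_inv_mul_diagonal_mul_permMatrix [NonAssocSemiring R] (π : Perm T)
    (d : T → R) : π⁻¹.permMatrix R * diagonal d * π.permMatrix R = diagonal (d ∘ π.symm) := by
  rw [PEquiv.toMatrix_toPEquiv_mul, PEquiv.mul_toMatrix_toPEquiv, submatrix_submatrix]
  exact submatrix_diagonal_equiv d π.symm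

theorem eq_permMatrix_inv_mul_diagonal [NonAssocSemiring R] {U : Matrix T T R} {π : Perm T}
    (hπ : ∀ k j, U k j ≠ 0 ↔ π j = k) :
    U = π⁻¹.permMatrix R * diagonal fun j => U (π j) j := by
  ext k j
  rw [PEquiv.toMatrix_toPEquiv_mul, submatrix_apply, diagonal_apply, id]
  split_ifs with h
  · subst h
    simp
  · by_contra hkj
    exact h (Perm.inv_eq_iff_eq.mpr ((hπ k j).mp hkj).symm)

end PermMatrix

end Fintype

end Matrix

theorem permMatrix_eq_perm_permMatrix {T : Type*} [DecidableEq T] (π : Perm T) :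
    permMatrix π = π.permMatrix ℝ := by
  ext i j
  simp [permMatrix, PEquiv.toMatrix_apply]

theorem stmt1_general {T : Type*} [Fintype T] [DecidableEq T] [LinearOrder T]
    (U Λ Λ' : Matrix T T ℝ)
    (hU : ∀ i j, 0 ≤ U i j)
    (hΛut : ∀ i j, j < i → Λ i j = 0)
    (hΛd : ∀ i, 0 < Λ i i)
    (hΛ'nn : ∀ i j, 0 ≤ Λ' i j) (hΛ'ut : ∀ i j, j < i → Λ' i j = 0)
    (hΛ'd : ∀ i, 0 < Λ' i i)
    (heq : Λ = Uᵀ * Λ' * U) :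
    ∃ (π : Equiv.Perm T) (d : T → ℝ),
      (∀ t, 0 < d t) ∧
      (∀ i j, j < i → ((permMatrix π)ᵀ * Λ * permMatrix π) i j = 0) ∧
      U = (permMatrix π)⁻¹ * Matrix.diagonal d := by
  subst heq
  obtain ⟨π, hπ⟩ := exists_perm_forall_apply_ne_zero_iff
    (fun j => exists_apply_ne_zero_of_transpose_mul_mul_apply_ne_zero (hΛd j).ne')
    (eq_of_apply_ne_zero_of_isUpperTriangular_transpose_mul_mul hU hΛ'nn (fun k => (hΛ'd k).ne')
      fun i j => hΛut i j)
  set d : T → ℝ := fun j => U (π j) j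
  have hUd : U = π⁻¹.permMatrix ℝ * diagonal d := eq_permMatrix_inv_mul_diagonal hπ
  have hUπ : U * π.permMatrix ℝ = diagonal (d ∘ π.symm) := by
    rw [hUd, permMatrix_inv_mul_diagonal_mul_permMatrix]
  have hconj : (π.permMatrix ℝ)ᵀ * (Uᵀ * Λ' * U) * π.permMatrix ℝ =
      (U * π.permMatrix ℝ)ᵀ * Λ' * (U * π.permMatrix ℝ) := by
    simp only [transpose_mul, Matrix.mul_assoc]
  refine ⟨π, d, fun j => (hU _ _).lt_of_ne' ((hπ _ _).mpr rfl), fun i j hji => ?_, ?_⟩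
  · rw [permMatrix_eq_perm_permMatrix, hconj, hUπ, diagonal_transpose]
    exact ((blockTriangular_diagonal _).mul (fun i j => hΛ'ut i j)).mul
      (blockTriangular_diagonal _) hji
  · rw [permMatrix_eq_perm_permMatrix, inv_permMatrix, ← hUd]

theorem stmt1 {T : Type*} [Fintype T] [DecidableEq T] [LinearOrder T]
    (U Λ Λ' : Matrix T T ℝ)
    (hU : ∀ i j, 0 ≤ U i j)
    (hΛnn : ∀ i j, 0 ≤ Λ i j) (hΛut : ∀ i j, j < i → Λ i j = 0)
    (hΛd : ∀ i, 0 < Λ i i)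
    (hΛ'nn : ∀ i j, 0 ≤ Λ' i j) (hΛ'ut : ∀ i j, j < i → Λ' i j = 0)
    (hΛ'd : ∀ i, 0 < Λ' i i)
    (heq : Λ = Uᵀ * Λ' * U) :
    ∃ (π : Equiv.Perm T) (d : T → ℝ),
      (∀ t, 0 < d t) ∧
      (∀ i j, j < i → ((permMatrix π)ᵀ * Λ * permMatrix π) i j = 0) ∧
      U = (permMatrix π)⁻¹ * Matrix.diagonal d :=
  stmt1_general U Λ Λ' hU hΛut hΛd hΛ'nn hΛ'ut hΛ'd heq
end

section
/- If Λ = Uᵀ Λ' U where U is a nonnegative square matrix and Λ, Λ' are nonnegative upper-triangular matrices with strictly positive diagonal entries, then for any indices i < j, there is no row index t such that both U_{t,i} > 0 and U_{t,j} > 0. -/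
open Matrix

theorem Matrix.mul_apply_mul_le_transpose_mul_mul_apply {n R : Type*} [Fintype n]
    [CommSemiring R] [PartialOrder R] [IsOrderedRing R] {U A : Matrix n n R}
    (hU : ∀ i j, 0 ≤ U i j) (hA : ∀ i j, 0 ≤ A i j) (i j t : n) :
    U t i * A t t * U t j ≤ (Uᵀ * A * U) i j := by
  have hUA : ∀ k, 0 ≤ (Uᵀ * A) i k := fun k =>
    Finset.sum_nonneg fun s _ => mul_nonneg (hU s i) (hA s k)
  calc U t i * A t t * U t j
      ≤ (Uᵀ * A) i t * U t j := by
        gcongr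
        · exact hU t j
        · exact Finset.single_le_sum (f := fun s => U s i * A s t)
            (fun s _ => mul_nonneg (hU s i) (hA s t)) (Finset.mem_univ t)
    _ ≤ (Uᵀ * A * U) i j :=
        Finset.single_le_sum (f := fun k => (Uᵀ * A) i k * U k j)
          (fun k _ => mul_nonneg (hUA k) (hU k j)) (Finset.mem_univ t)

theorem stmt3_general {T : Type*} [Fintype T] [LinearOrder T]
    (U Λ Λ' : Matrix T T ℝ)
    (hU : ∀ i j, 0 ≤ U i j)
    (hΛut : ∀ i j, j < i → Λ i j = 0)
    (hΛ'nn : ∀ i j, 0 ≤ Λ' i j)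
    (hΛ'd : ∀ i, 0 < Λ' i i)
    (heq : Λ = Uᵀ * Λ' * U) :
    ∀ i j, i < j → ¬ ∃ t, 0 < U t i ∧ 0 < U t j := by
  rintro i j hij ⟨t, hti, htj⟩
  have hpos : 0 < U t j * Λ' t t * U t i := mul_pos (mul_pos htj (hΛ'd t)) hti
  have hle := mul_apply_mul_le_transpose_mul_mul_apply hU hΛ'nn j i t
  rw [← heq, hΛut j i hij] at hle
  exact hpos.not_ge hle

theorem stmt3 {T : Type*} [Fintype T] [DecidableEq T] [LinearOrder T]
    (U Λ Λ' : Matrix T T ℝ)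
    (hU : ∀ i j, 0 ≤ U i j)
    (hΛnn : ∀ i j, 0 ≤ Λ i j) (hΛut : ∀ i j, j < i → Λ i j = 0)
    (hΛd : ∀ i, 0 < Λ i i)
    (hΛ'nn : ∀ i j, 0 ≤ Λ' i j) (hΛ'ut : ∀ i j, j < i → Λ' i j = 0)
    (hΛ'd : ∀ i, 0 < Λ' i i)
    (heq : Λ = Uᵀ * Λ' * U) :
    ∀ i j, i < j → ¬ ∃ t, 0 < U t i ∧ 0 < U t j :=
  stmt3_general U Λ Λ' hU hΛut hΛ'nn hΛ'd heq
end

section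
/- Let W be a |T|×|A| nonnegative matrix, |T| ≤ |A|, such that some selection of |T| columns of W forms a monomial matrix (permuted positive diagonal matrix). Suppose Wᵀ Λ W = W'ᵀ Λ' W' where W' is a nonnegative |T|×|A| matrix and Λ, Λ' are nonnegative upper-triangular |T|×|T| matrices with strictly positive diagonal entries. Then there exists a positive diagonal matrix D and a permutation matrix Π with Πᵀ Λ Π upper-triangular such that W' = Π⁻¹ D W. -/
open Matrix

/-- A monomial matrix: exactly one nonzero entry in each row and column,
and every nonzero entry is positive. -/
def IsMonomial {T : Type*} (X : Matrix T T ℝ) : Prop :=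
  (∀ t, ∃! a, X t a ≠ 0) ∧ (∀ a, ∃! t, X t a ≠ 0) ∧ (∀ t a, X t a ≠ 0 → 0 < X t a)

lemma permMatrix_conj_apply {T : Type*} [Fintype T] [DecidableEq T]
    (π : Equiv.Perm T) (M : Matrix T T ℝ) (i j : T) :
    ((permMatrix π)ᵀ * M * permMatrix π) i j = M (π.symm i) (π.symm j) := by
  simp only [mul_apply, transpose_apply, permMatrix, Finset.sum_mul, ite_mul, one_mul,
    zero_mul, mul_ite, mul_one, mul_zero]
  have h : ∀ (k : T) (c : T) (f : T → ℝ), (∑ x : T, if π x = c then f x else 0) = f (π.symm c) := by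
    intro k c f
    rw [Finset.sum_eq_single (π.symm c)] <;> simp +contextual [Equiv.eq_symm_apply, eq_comm]
  rw [h i j, h i i]

lemma permMatrix_mul_symm {T : Type*} [Fintype T] [DecidableEq T] (π : Equiv.Perm T) :
    permMatrix π * permMatrix π.symm = 1 := by
  ext i j
  simp only [mul_apply, permMatrix, ite_mul, one_mul, zero_mul]
  simp [Equiv.symm_apply_eq, one_apply, Finset.sum_ite_eq']

theorem stmt5 {T A : Type*} [Fintype T] [DecidableEq T] [LinearOrder T]
    [Fintype A] [LinearOrder A]
    (hcard : Fintype.card T ≤ Fintype.card A)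
    (W W' : Matrix T A ℝ) (Λ Λ' : Matrix T T ℝ)
    (hW : ∀ t a, 0 ≤ W t a)
    (hsel : ∃ c : T ↪ A, IsMonomial (fun t s => W t (c s)))
    (hW' : ∀ t a, 0 ≤ W' t a)
    (hΛnn : ∀ i j, 0 ≤ Λ i j) (hΛut : ∀ i j, j < i → Λ i j = 0)
    (hΛd : ∀ i, 0 < Λ i i)
    (hΛ'nn : ∀ i j, 0 ≤ Λ' i j) (hΛ'ut : ∀ i j, j < i → Λ' i j = 0)
    (hΛ'd : ∀ i, 0 < Λ' i i)
    (heq : Wᵀ * Λ * W = W'ᵀ * Λ' * W') :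
    ∃ (π : Equiv.Perm T) (d : T → ℝ),
      (∀ t, 0 < d t) ∧
      (∀ i j, j < i → ((permMatrix π)ᵀ * Λ * permMatrix π) i j = 0) ∧
      W' = (permMatrix π)⁻¹ * Matrix.diagonal d * W := by
  classical
  obtain ⟨c, hrow, hcol, hpos⟩ := hsel
  set X : Matrix T T ℝ := fun t s => W t (c s) with hXdef
  choose σ0 hσ0 hσ0u using hcol
  -- hσ0 : ∀ s, X (σ0 s) s ≠ 0 ; hσ0u : ∀ s t, X t s ≠ 0 → t = σ0 s
  have hσinj : Function.Injective σ0 := by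
    intro s s' h
    exact (hrow (σ0 s)).unique (hσ0 s) (h ▸ hσ0 s')
  have hσbij : Function.Bijective σ0 := (Finite.injective_iff_bijective).1 hσinj
  set e : Equiv.Perm T := Equiv.ofBijective σ0 hσbij with hedef
  have he : ∀ s, e s = σ0 s := fun s => rfl
  have hX0 : ∀ t s, t ≠ σ0 s → X t s = 0 := by
    intro t s h
    by_contra hne
    exact h (hσ0u s t hne)
  -- X invertible
  set Xi : Matrix T T ℝ := fun s t => if σ0 s = t then (X (σ0 s) s)⁻¹ else 0 with hXidef
  have hXXi : X * Xi = 1 := by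
    ext t t'
    rw [mul_apply, Finset.sum_eq_single (e.symm t')]
    · have hs : σ0 (e.symm t') = t' := e.apply_symm_apply t'
      by_cases h : t = t'
      · subst h
        have hne : X t (e.symm t) ≠ 0 := by have := hσ0 (e.symm t); rwa [hs] at this
        simp [hXidef, hs, mul_inv_cancel₀ hne, one_apply]
      · rw [hX0 t _ (by rw [hs]; exact h), zero_mul]
        simp [one_apply, h]
    · intro s _ hs
      have : σ0 s ≠ t' := fun h => hs (by rw [← h]; exact (e.symm_apply_apply s).symm)
      simp [hXidef, this]
    · simp
  have hXiX : Xi * X = 1 := by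
    ext s s'
    rw [mul_apply, Finset.sum_eq_single (σ0 s)]
    · simp only [hXidef, if_pos rfl]
      by_cases h : s = s'
      · subst h
        rw [inv_mul_cancel₀ (hσ0 s)]; simp [one_apply]
      · rw [hX0 (σ0 s) s' (fun hh => h (hσinj hh)), mul_zero]
        simp [one_apply, h]
    · intro t _ ht
      simp [hXidef, Ne.symm ht]
    · simp
  haveI hXinv : Invertible X := ⟨Xi, hXiX, hXXi⟩
  -- Λ and Λ' invertible
  have hΛbt : Λ.BlockTriangular id := fun i j hij => hΛut i j hij
  have hΛ'bt : Λ'.BlockTriangular id := fun i j hij => hΛ'ut i j hij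
  have hΛdet : Λ.det ≠ 0 := by
    rw [Matrix.det_of_upperTriangular hΛbt]
    exact Finset.prod_ne_zero_iff.2 fun i _ => (hΛd i).ne'
  have hΛ'det : Λ'.det ≠ 0 := by
    rw [Matrix.det_of_upperTriangular hΛ'bt]
    exact Finset.prod_ne_zero_iff.2 fun i _ => (hΛ'd i).ne'
  haveI : Invertible Λ := Λ.invertibleOfIsUnitDet (isUnit_iff_ne_zero.2 hΛdet)
  haveI : Invertible Λ' := Λ'.invertibleOfIsUnitDet (isUnit_iff_ne_zero.2 hΛ'det)
  -- selector matrix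
  set E : Matrix A T ℝ := fun a s => if c s = a then 1 else 0 with hEdef
  have hWE : W * E = X := by
    ext t s
    rw [mul_apply, Finset.sum_eq_single (c s)] <;> simp +contextual [hEdef, eq_comm, hXdef]
  have hW'E : ∀ t s, (W' * E) t s = W' t (c s) := by
    intro t s
    rw [mul_apply, Finset.sum_eq_single (c s)] <;> simp +contextual [hEdef, eq_comm]
  set Z : Matrix T T ℝ := W' * E with hZdef
  -- conjugated equations
  have heqc : Xᵀ * Λ * X = Zᵀ * Λ' * Z := by
    have h := congrArg (fun M => Eᵀ * M * E) heq
    simpa only [← hWE, hZdef, transpose_mul, Matrix.mul_assoc] using h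
  have heq1 : Xᵀ * (Λ * W) = Zᵀ * (Λ' * W') := by
    have h := congrArg (fun M => Eᵀ * M) heq
    simpa only [← hWE, hZdef, transpose_mul, Matrix.mul_assoc] using h
  -- Z invertible
  have hXdet : X.det ≠ 0 := (X.isUnit_iff_isUnit_det.1 (isUnit_of_invertible X)).ne_zero
  have hZdet : Z.det ≠ 0 := by
    intro h0
    have h := congrArg Matrix.det heqc
    simp only [Matrix.det_mul, Matrix.det_transpose, h0, zero_mul, mul_zero] at h
    exact (mul_ne_zero (mul_ne_zero hXdet hΛdet) hXdet) h
  haveI : Invertible Z := Z.invertibleOfIsUnitDet (isUnit_iff_ne_zero.2 hZdet)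
  set B : Matrix T T ℝ := Z * ⅟X with hBdef
  have hBX : B * X = Z := by rw [hBdef, Matrix.mul_assoc, invOf_mul_self, Matrix.mul_one]
  haveI : Invertible B := invertibleMul Z (⅟X)
  haveI : Invertible Xᵀ := X.invertibleTranspose
  haveI : Invertible Bᵀ := B.invertibleTranspose
  -- Λ = Bᵀ Λ' B
  have heqΛ : Λ = Bᵀ * Λ' * B := by
    have h1 : Xᵀ * (Λ * X) = Xᵀ * (Bᵀ * Λ' * B * X) := by
      rw [← Matrix.mul_assoc, heqc, ← hBX]
      simp only [transpose_mul, Matrix.mul_assoc]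
    have h2 := Matrix.mul_right_injective_of_invertible Xᵀ h1
    have h3 : Λ * X = Bᵀ * Λ' * B * X := h2
    exact Matrix.mul_left_injective_of_invertible X h3
  -- W' = B W
  have hW'BW : W' = B * W := by
    have h1 : Xᵀ * (Λ * W) = Xᵀ * (Bᵀ * (Λ' * W')) := by
      rw [heq1, ← hBX]
      simp only [transpose_mul, Matrix.mul_assoc]
    have h2 : Λ * W = Bᵀ * (Λ' * W') := Matrix.mul_right_injective_of_invertible Xᵀ h1
    have h3 : Bᵀ * (Λ' * (B * W)) = Bᵀ * (Λ' * W') := by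
      rw [← h2, heqΛ]; simp only [Matrix.mul_assoc]
    have h4 : Λ' * (B * W) = Λ' * W' := Matrix.mul_right_injective_of_invertible Bᵀ h3
    exact (Matrix.mul_right_injective_of_invertible Λ' h4).symm
  -- B is nonnegative
  have hBnn : ∀ t u, 0 ≤ B t u := by
    intro t u
    set s : T := e.symm u with hsdef
    have hsu : σ0 s = u := e.apply_symm_apply u
    have hXpos : 0 < X u s := by
      have := hσ0 s; rw [hsu] at this
      exact hpos u s this
    have hBXval : (B * X) t s = B t u * X u s := by
      rw [mul_apply, Finset.sum_eq_single u]
      · intro j _ hj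
        rw [hX0 j s (hsu ▸ hj), mul_zero]
      · simp
    have hge : 0 ≤ B t u * X u s := by
      rw [← hBXval, hBX, hW'E]
      exact hW' t (c s)
    nlinarith [hXpos, hge]
  -- columns of B have disjoint supports
  have hkey : ∀ t u, u < t → ∀ i, B i t * B i u = 0 := by
    intro t u htu i
    have hsum : ∑ l : T, ∑ k : T, B k t * Λ' k l * B l u = 0 := by
      have hval : (Bᵀ * Λ' * B) t u = ∑ l : T, ∑ k : T, B k t * Λ' k l * B l u := by
        simp [mul_apply, transpose_apply, Finset.sum_mul]
      rw [← hval, ← heqΛ]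
      exact hΛut t u htu
    have hnn : ∀ l ∈ Finset.univ, 0 ≤ ∑ k : T, B k t * Λ' k l * B l u := by
      intro l _
      exact Finset.sum_nonneg fun k _ =>
        mul_nonneg (mul_nonneg (hBnn k t) (hΛ'nn k l)) (hBnn l u)
    have h1 := (Finset.sum_eq_zero_iff_of_nonneg hnn).1 hsum i (Finset.mem_univ i)
    have hnn2 : ∀ k ∈ Finset.univ, (0:ℝ) ≤ B k t * Λ' k i * B i u := fun k _ =>
      mul_nonneg (mul_nonneg (hBnn k t) (hΛ'nn k i)) (hBnn i u)
    have h2 := (Finset.sum_eq_zero_iff_of_nonneg hnn2).1 h1 i (Finset.mem_univ i)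
    have : Λ' i i * (B i t * B i u) = 0 := by linear_combination h2
    rcases mul_eq_zero.1 this with h | h
    · exact absurd h (hΛ'd i).ne'
    · exact h
  have hdisj : ∀ t u, t ≠ u → ∀ i, B i t * B i u = 0 := by
    intro t u htu i
    rcases htu.lt_or_gt with h | h
    · rw [mul_comm]; exact hkey u t h i
    · exact hkey t u h i
  -- each row of B has a nonzero entry, each column too
  have hrowB : ∀ i, ∃ t, B i t ≠ 0 := by
    intro i
    by_contra hno
    push_neg at hno
    have : (B * ⅟B) i i = 0 := by
      rw [mul_apply]
      exact Finset.sum_eq_zero fun j _ => by rw [hno j, zero_mul]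
    rw [mul_invOf_self] at this
    simp [one_apply] at this
  have hcolB : ∀ t, ∃ i, B i t ≠ 0 := by
    intro t
    by_contra hno
    push_neg at hno
    have : (⅟B * B) t t = 0 := by
      rw [mul_apply]
      exact Finset.sum_eq_zero fun j _ => by rw [hno j, mul_zero]
    rw [invOf_mul_self] at this
    simp [one_apply] at this
  have hrowU : ∀ i, ∃! t, B i t ≠ 0 := by
    intro i
    obtain ⟨t, ht⟩ := hrowB i
    refine ⟨t, ht, fun u hu => ?_⟩
    by_contra hne
    exact hu (by
      have := hdisj u t hne i
      rcases mul_eq_zero.1 this with h | h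
      · exact h
      · exact absurd h ht)
  choose τ hτ1 hτ2 using hrowU
  have hτsurj : Function.Surjective τ := by
    intro t
    obtain ⟨i, hi⟩ := hcolB t
    exact ⟨i, (hτ2 i t hi).symm⟩
  have hτbij : Function.Bijective τ := Finite.surjective_iff_bijective.1 hτsurj
  set et : Equiv.Perm T := Equiv.ofBijective τ hτbij with hetdef
  have hetτ : ∀ i, et i = τ i := fun i => rfl
  have hB0 : ∀ i j, j ≠ τ i → B i j = 0 := by
    intro i j h
    by_contra hne
    exact h (hτ2 i j hne)
  refine ⟨et.symm, fun u => B (et.symm u) u, ?_, ?_, ?_⟩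
  · intro u
    have h1 : τ (et.symm u) = u := et.apply_symm_apply u
    have h2 : B (et.symm u) u ≠ 0 := by
      have := hτ1 (et.symm u); rwa [h1] at this
    exact lt_of_le_of_ne (hBnn _ _) (Ne.symm h2)
  · intro i j hij
    rw [permMatrix_conj_apply, Equiv.symm_symm, hetτ, hetτ, heqΛ]
    rw [show (Bᵀ * Λ' * B) (τ i) (τ j) = ∑ l : T, ∑ k : T, B k (τ i) * Λ' k l * B l (τ j) by
      simp [mul_apply, transpose_apply, Finset.sum_mul]]
    refine Finset.sum_eq_zero fun l _ => Finset.sum_eq_zero fun k _ => ?_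
    by_cases hk : k = i
    · by_cases hl : l = j
      · subst hk; subst hl; rw [hΛ'ut k l hij]; ring
      · rw [hB0 l (τ j) (fun h => hl (hτbij.1 h).symm)]
        ring
    · rw [hB0 k (τ i) (fun h => hk (hτbij.1 h).symm)]
      ring
  · have hPinv : (permMatrix et.symm)⁻¹ = permMatrix et := by
      have := permMatrix_mul_symm et.symm
      rw [Equiv.symm_symm] at this
      exact Matrix.inv_eq_right_inv this
    rw [hPinv, hW'BW]
    ext t a
    have hL : (B * W) t a = B t (τ t) * W (τ t) a := by
      rw [mul_apply, Finset.sum_eq_single (τ t)]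
      · intro j _ hj
        rw [hB0 t j hj, zero_mul]
      · simp
    have h1 : et.symm (τ t) = t := by
      have := et.symm_apply_apply t
      rwa [hetτ] at this
    have hR : (permMatrix et * Matrix.diagonal (fun u => B (et.symm u) u) * W) t a
        = B t (τ t) * W (τ t) a := by
      rw [mul_apply, Finset.sum_eq_single (τ t)]
      · rw [Matrix.mul_diagonal, h1]
        simp [permMatrix, hetτ]
      · intro b _ hb
        rw [Matrix.mul_diagonal]
        simp [permMatrix, hetτ, Ne.symm hb]
      · simp
    rw [hL, hR]
end

section
/- Let W be a |T|×|A| real matrix with W Wᵀ = I, M a |A|×|A| real matrix, and Λ a |T|×|T| real matrix. Then ‖M − Wᵀ Λ W‖²_F = ‖Λ − W M Wᵀ‖²_F − ‖W M Wᵀ‖²_F + ‖M‖²_F. -/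
open Matrix

/-! Expanding both squares, the identity reduces to two facts about the Frobenius inner product
`⟨X, Y⟩ = tr (X Yᵀ)`: `Λ ↦ Wᵀ Λ W` is an isometry when `W Wᵀ = 1`, and it is the adjoint of
`M ↦ W M Wᵀ`. -/

namespace Matrix

variable {m n R : Type*} [Fintype m] [Fintype n] [CommRing R]

theorem trace_sub_mul_transpose_sub (X Y : Matrix m n R) :
    trace ((X - Y) * (X - Y)ᵀ) = trace (X * Xᵀ) - 2 * trace (X * Yᵀ) + trace (Y * Yᵀ) := by
  have hsymm : trace (Y * Xᵀ) = trace (X * Yᵀ) := by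
    rw [← trace_transpose, transpose_mul, transpose_transpose]
  simp only [transpose_sub, Matrix.sub_mul, Matrix.mul_sub, trace_sub, hsymm]
  ring

theorem trace_conj_mul_transpose_conj [DecidableEq m] {W : Matrix m n R} (hW : W * Wᵀ = 1)
    (Λ : Matrix m m R) :
    trace ((Wᵀ * Λ * W) * (Wᵀ * Λ * W)ᵀ) = trace (Λ * Λᵀ) := by
  calc trace ((Wᵀ * Λ * W) * (Wᵀ * Λ * W)ᵀ)
      = trace (Wᵀ * (Λ * Λᵀ * W)) := by
        simp only [transpose_mul, transpose_transpose, Matrix.mul_assoc]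
        rw [← Matrix.mul_assoc W Wᵀ, hW, Matrix.one_mul]
    _ = trace (Λ * Λᵀ * (W * Wᵀ)) := by rw [trace_mul_comm, Matrix.mul_assoc]
    _ = trace (Λ * Λᵀ) := by rw [hW, Matrix.mul_one]

theorem trace_mul_transpose_conj (M : Matrix n n R) (W : Matrix m n R) (Λ : Matrix m m R) :
    trace (M * (Wᵀ * Λ * W)ᵀ) = trace (Λ * (W * M * Wᵀ)ᵀ) := by
  calc trace (M * (Wᵀ * Λ * W)ᵀ)
      = trace ((Wᵀ * Λ * W) * Mᵀ) := by
        rw [← trace_transpose, transpose_mul, transpose_transpose]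
    _ = trace (Λ * (W * (Mᵀ * Wᵀ))) := by
        simp only [Matrix.mul_assoc]
        rw [trace_mul_comm]
        simp only [Matrix.mul_assoc]
    _ = trace (Λ * (W * M * Wᵀ)ᵀ) := by
        simp only [transpose_mul, transpose_transpose, Matrix.mul_assoc]

end Matrix

theorem stmt6 {T A : Type*} [Fintype T] [DecidableEq T] [Fintype A]
    (W : Matrix T A ℝ) (hW : W * Wᵀ = 1)
    (M : Matrix A A ℝ) (Λ : Matrix T T ℝ) :
    Matrix.trace ((M - Wᵀ * Λ * W) * (M - Wᵀ * Λ * W)ᵀ) =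
      Matrix.trace ((Λ - W * M * Wᵀ) * (Λ - W * M * Wᵀ)ᵀ)
        - Matrix.trace ((W * M * Wᵀ) * (W * M * Wᵀ)ᵀ)
        + Matrix.trace (M * Mᵀ) := by
  rw [trace_sub_mul_transpose_sub, trace_sub_mul_transpose_sub,
    trace_conj_mul_transpose_conj hW, trace_mul_transpose_conj]
  ring
end
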